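/- Let ε : 𝒜_n → ℂ be a ring homomorphism and g : {1, …, n} → {±1} any function, and define the ring homomorphism δ : 𝒜_n → ℂ by δ(a_{ij}) = g(i) g(j) ε(a_{ij}) for all i ≠ j. Then for every word β in the generators σ_1^{±1}, …, σ_{n−1}^{±1} of B_n and all 1 ≤ i, j ≤ n: δ((Φ^L_β)_{ij}) = g(perm(β)(i)) g(j) ε((Φ^L_β)_{ij}) and δ((Φ^R_β)_{ij}) = g(i) g(perm(β)(j)) ε((Φ^R_β)_{ij}). -/

import Mathlib

open scoped TensorProduct

/-- Generator index set for the algebra `𝒜ₙ`: pairs `(i,j)` with `1 ≤ i,j ≤ n`, `i ≠ j`. -/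
abbrev Idx (n : ℕ) : Type := {q : ℕ × ℕ // q.1 ≠ q.2 ∧ 1 ≤ q.1 ∧ q.1 ≤ n ∧ 1 ≤ q.2 ∧ q.2 ≤ n}

/-- `𝒜ₙ`, the free noncommutative unital `ℤ`-algebra on the generators `a_{ij}`. -/
abbrev FA (n : ℕ) : Type := FreeAlgebra ℤ (Idx n)

/-- The generator `a_{ij}` when the indices are in range (`1 ≤ i,j ≤ n`, `i ≠ j`); `0` otherwise. -/
noncomputable def gen (n i j : ℕ) : FA n :=
  if h : i ≠ j ∧ 1 ≤ i ∧ i ≤ n ∧ 1 ≤ j ∧ j ≤ n then FreeAlgebra.ι ℤ (⟨(i, j), h⟩ : Idx n) else 0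

/-- Image of the generator `a_{ij}` under `φ_{σ_k}`. -/
noncomputable def phiGenImg (n k i j : ℕ) : FA n :=
  if i = k then
    (if j = k + 1 then -gen n (k+1) k
     else gen n (k+1) j - gen n (k+1) k * gen n k j)
  else if i = k + 1 then
    (if j = k then -gen n k (k+1) else gen n k j)
  else
    if j = k then gen n i (k+1) - gen n i k * gen n k (k+1)
    else if j = k + 1 then gen n i k
    else gen n i j

/-- Image of the generator `a_{ij}` under `φ_{σ_k}⁻¹ = φ_{σ_k⁻¹}`. -/
noncomputable def phiInvGenImg (n k i j : ℕ) : FA n :=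
  if i = k + 1 then
    (if j = k then -gen n k (k+1)
     else gen n k j - gen n k (k+1) * gen n (k+1) j)
  else if i = k then
    (if j = k + 1 then -gen n (k+1) k else gen n (k+1) j)
  else
    if j = k + 1 then gen n i k - gen n i (k+1) * gen n (k+1) k
    else if j = k then gen n i (k+1)
    else gen n i j

/-- `φ_{σ_k}` for the letter `(k, true)` and `φ_{σ_k⁻¹}` for the letter `(k, false)`. -/
noncomputable def phiLetter (n : ℕ) (l : ℕ × Bool) : FA n →ₐ[ℤ] FA n :=
  FreeAlgebra.lift ℤ fun g : Idx n =>
    if l.2 then phiGenImg n l.1 g.val.1 g.val.2 else phiInvGenImg n l.1 g.val.1 g.val.2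

/-- `φ_β` for a word `β` in the letters `σ_k^{±1}`, with `φ_{β₁β₂} = φ_{β₁} ∘ φ_{β₂}`. -/
noncomputable def phiWord (n : ℕ) (w : List (ℕ × Bool)) : FA n →ₐ[ℤ] FA n :=
  w.foldr (fun l f => (phiLetter n l).comp f) (AlgHom.id ℤ (FA n))

/-- `β` is a word in the generators `σ_1^{±1}, …, σ_{n−1}^{±1}` of the braid group `B_n`. -/
def WordIn (n : ℕ) (w : List (ℕ × Bool)) : Prop := ∀ l ∈ w, 1 ≤ l.1 ∧ l.1 + 1 ≤ n

/-- The natural inclusion `𝒜ₙ → 𝒜ₙ₊₁`. -/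
noncomputable def incl (n : ℕ) : FA n →ₐ[ℤ] FA (n+1) :=
  FreeAlgebra.lift ℤ fun g : Idx n => gen (n+1) g.val.1 g.val.2

/-- `M` (a matrix recorded as a function `ℕ → ℕ → 𝒜ₙ`, supported on `[1,n] × [1,n]`)
is the matrix `Φ^L_β`:  `φ*_β(a_{i,n+1}) = ∑_j M_{ij} a_{j,n+1}`. -/
def IsPhiL (n : ℕ) (w : List (ℕ × Bool)) (M : ℕ → ℕ → FA n) : Prop :=
  (∀ i j, i ∉ Finset.Icc 1 n ∨ j ∉ Finset.Icc 1 n → M i j = 0) ∧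
  ∀ i ∈ Finset.Icc 1 n,
    phiWord (n+1) w (gen (n+1) i (n+1)) =
      ∑ j ∈ Finset.Icc 1 n, incl n (M i j) * gen (n+1) j (n+1)

/-- `M` is the matrix `Φ^R_β`:  `φ*_β(a_{n+1,i}) = ∑_j a_{n+1,j} M_{ji}`. -/
def IsPhiR (n : ℕ) (w : List (ℕ × Bool)) (M : ℕ → ℕ → FA n) : Prop :=
  (∀ i j, i ∉ Finset.Icc 1 n ∨ j ∉ Finset.Icc 1 n → M i j = 0) ∧
  ∀ i ∈ Finset.Icc 1 n,
    phiWord (n+1) w (gen (n+1) (n+1) i) =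
      ∑ j ∈ Finset.Icc 1 n, gen (n+1) (n+1) j * incl n (M j i)

/-- The permutation (of `ℕ`, via 1-based strand labels) determined by a braid word,
with `perm (w₁ ++ w₂) = perm w₁ * perm w₂`. -/
def permWord (w : List (ℕ × Bool)) : Equiv.Perm ℕ :=
  w.foldr (fun l f => Equiv.swap l.1 (l.1 + 1) * f) 1

/-- The writhe (exponent sum) of a braid word. -/
def writhe (w : List (ℕ × Bool)) : ℤ :=
  (w.map fun l => if l.2 then (1 : ℤ) else -1).sum

/-- Conjugation, as an algebra map to the opposite algebra. -/
noncomputable def conjHom (n : ℕ) : FA n →ₐ[ℤ] (FA n)ᵐᵒᵖ :=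
  FreeAlgebra.lift ℤ fun g : Idx n => MulOpposite.op (gen n g.val.2 g.val.1)

/-- Conjugation `x ↦ x̄`: the `ℤ`-linear anti-automorphism with `a_{ij} ↦ a_{ji}`. -/
noncomputable def conj (n : ℕ) (x : FA n) : FA n := (conjHom n x).unop

/-- Conjugation as a `ℤ`-linear map. -/
noncomputable def conjLin (n : ℕ) : FA n →ₗ[ℤ] FA n :=
  (MulOpposite.opLinearEquiv ℤ).symm.toLinearMap ∘ₗ (conjHom n).toLinearMap

/-- The word `τ_{a,p} = σ_a σ_{a+1} ⋯ σ_{a+p−1}`. -/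
def tauWord (a p : ℕ) : List (ℕ × Bool) := (List.range p).map fun t => (a + t, true)

/-- The word `κ_{a,l} = τ_{a+l−1,p} τ_{a+l−2,p} ⋯ τ_{a,p}`. -/
def kappaWord (a l p : ℕ) : List (ℕ × Bool) :=
  (((List.range l).reverse).map fun t => tauWord (a + t) p).flatten

/-- The inverse of a braid word. -/
def invWord (w : List (ℕ × Bool)) : List (ℕ × Bool) := w.reverse.map fun l => (l.1, !l.2)

/-- The `p`-cable `α^{(p)}` of a braid word `α` (each strand replaced by `p` parallel strands):
substitute `σ_m ↦ κ_{(m−1)p+1,p}` and `σ_m⁻¹ ↦ κ_{(m−1)p+1,p}⁻¹`. -/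
def cable (p : ℕ) (w : List (ℕ × Bool)) : List (ℕ × Bool) :=
  (w.map fun l =>
    if l.2 then kappaWord ((l.1 - 1) * p + 1) p p
    else invWord (kappaWord ((l.1 - 1) * p + 1) p p)).flatten

/-- The product `a_{x₁x₂} a_{x₂x₃} ⋯ a_{x_{m-1}x_m}` along a list `[x₁, …, x_m]`
(`1` for lists of length `≤ 1`). -/
noncomputable def pathFactors (n : ℕ) : List ℕ → FA n
  | x :: y :: rest => gen n x y * pathFactors n (y :: rest)
  | _ => 1

/-- `A(i,j,X) = Σ_{Y ⊆ X} (−1)^{|Y|} a_{i y₁} a_{y₁ y₂} ⋯ a_{y_k j}` (ascending order on `Y`). -/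
noncomputable def Aexp (n i j : ℕ) (X : Finset ℕ) : FA n :=
  ∑ Y ∈ X.powerset, ((-1 : ℤ) ^ Y.card) • pathFactors n (i :: (Y.sort (· ≤ ·) ++ [j]))

/-- `A'(i,j,X) = Σ_{Y ⊆ X} (−1)^{|Y|} a_{i y_k} a_{y_k y_{k−1}} ⋯ a_{y₁ j}` (descending order). -/
noncomputable def A'exp (n i j : ℕ) (X : Finset ℕ) : FA n :=
  ∑ Y ∈ X.powerset, ((-1 : ℤ) ^ Y.card) • pathFactors n (i :: ((Y.sort (· ≤ ·)).reverse ++ [j]))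

/-- `B'(i,j,X) = Σ_{Y ⊆ X, min Y ≠ j} c_Y a_{i y_k} ⋯ a_{y₁ j}`, where `c_Y = (−1)^{|Y|+1}` if all
elements of `Y` exceed `j` (including `Y = ∅`), and `c_Y = (−1)^{|Y|}` otherwise. -/
noncomputable def B'exp (n i j : ℕ) (X : Finset ℕ) : FA n :=
  ∑ Y ∈ X.powerset.filter (fun Y => Y.min ≠ (j : WithTop ℕ)),
    (if ∀ y ∈ Y, j < y then ((-1 : ℤ) ^ (Y.card + 1)) else ((-1 : ℤ) ^ Y.card)) •
      pathFactors n (i :: ((Y.sort (· ≤ ·)).reverse ++ [j]))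

/-- For `i = (q_i − 1)p + r_i` with `1 ≤ r_i ≤ p`: the quotient `q_i`. -/
def qIdx (p i : ℕ) : ℕ := (i - 1) / p + 1

/-- For `i = (q_i − 1)p + r_i` with `1 ≤ r_i ≤ p`: the remainder `r_i`. -/
def rIdx (p i : ℕ) : ℕ := (i - 1) % p + 1

/-- The homomorphism `ψ : 𝒜_{kp} → 𝒜_k ⊗ 𝒜_p`. -/
noncomputable def psi (k p : ℕ) : FA (k * p) →ₐ[ℤ]
    @TensorProduct ℤ _ (FA k) (FA p) _ _ Algebra.toModule Algebra.toModule :=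
  FreeAlgebra.lift ℤ fun g : Idx (k * p) =>
    if qIdx p g.val.1 = qIdx p g.val.2 then
      (1 : FA k) ⊗ₜ[ℤ] gen p (rIdx p g.val.1) (rIdx p g.val.2)
    else if rIdx p g.val.1 = rIdx p g.val.2 then
      gen k (qIdx p g.val.1) (qIdx p g.val.2) ⊗ₜ[ℤ] (1 : FA p)
    else if (qIdx p g.val.1 < qIdx p g.val.2 ∧ rIdx p g.val.2 < rIdx p g.val.1) ∨
            (qIdx p g.val.2 < qIdx p g.val.1 ∧ rIdx p g.val.1 < rIdx p g.val.2) then 0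
    else gen k (qIdx p g.val.1) (qIdx p g.val.2) ⊗ₜ[ℤ] gen p (rIdx p g.val.1) (rIdx p g.val.2)

/-- `ψ*(x · a_{i,*}) = ψ(x) · (a_{q_i,*} ⊗ a_{r_i,*})`, the image of the element `x · a_{i,*}`
of `𝒜_{kp}^L` under `ψ* : 𝒜_{kp}^L → 𝒜_k^L ⊗ 𝒜_p^L`, the target realized inside
`𝒜_{k+1} ⊗ 𝒜_{p+1}`. -/
noncomputable def psiStarElt (k p : ℕ) (x : FA (k * p)) (i : ℕ) :
    @TensorProduct ℤ _ (FA (k+1)) (FA (p+1)) _ _ Algebra.toModule Algebra.toModule :=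
  (Algebra.TensorProduct.map (incl k) (incl p)) (psi k p x) *
    (@TensorProduct.tmul ℤ _ (FA (k+1)) (FA (p+1)) _ _ Algebra.toModule Algebra.toModule
      (gen (k+1) (qIdx p i) (k+1)) (gen (p+1) (rIdx p i) (p+1)))

/-- The `(i,j)` entry of `Δ(β) = diag[(−1)^{w(β)}, 1, …, 1]` (1-based indices). -/
noncomputable def deltaEnt (w : List (ℕ × Bool)) (i j : ℕ) : ℂ :=
  if i = j then (if i = 1 then (-1 : ℂ) ^ writhe w else 1) else 0

/-!
For a sign function `h`, let `τ_h` be the automorphism `a_{ij} ↦ h(i) h(j) a_{ij}`. Every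
`φ_{σ_k}^{±1}(a_{ij})` is a combination of paths from `σ_k(i)` to `σ_k(j)`, and in a product
`a_{ik} a_{kj}` the middle sign `h(k)²` is `1`; hence `τ_h ∘ φ_β = φ_β ∘ τ_{h ∘ perm β}`. So
`φ*_β(a_{i,n+1})` is multiplied by `g(perm β i) g(n+1)` under `τ_g`, whereas applying `τ_g`
termwise to `∑ⱼ (Φ^L_β)_{ij} a_{j,n+1}` multiplies the `j`-th term by `g(j) g(n+1)` and replaces
`(Φ^L_β)_{ij}` by `τ_g (Φ^L_β)_{ij}`. Reading off the coefficient of `a_{j,n+1}` with a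
homomorphism `𝒜_{n+1} → ℂ` extending `ε` and using `ε ∘ τ_g = δ` gives the claim; the
argument for `Φ^R_β` is the mirror image.
-/

lemma gen_eq_ι {m a b : ℕ} (hab : a ≠ b ∧ 1 ≤ a ∧ a ≤ m ∧ 1 ≤ b ∧ b ≤ m) :
    gen m a b = FreeAlgebra.ι ℤ ⟨(a, b), hab⟩ :=
  dif_pos hab

lemma lift_gen {A : Type*} [Semiring A] [Algebra ℤ A] {m a b : ℕ} (f : Idx m → A)
    (hab : a ≠ b ∧ 1 ≤ a ∧ a ≤ m ∧ 1 ≤ b ∧ b ≤ m) :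
    FreeAlgebra.lift ℤ f (gen m a b) = f ⟨(a, b), hab⟩ := by
  rw [gen_eq_ι hab, FreeAlgebra.lift_ι_apply]

lemma incl_ι (n : ℕ) (q : Idx n) : incl n (FreeAlgebra.ι ℤ q) = gen (n+1) q.val.1 q.val.2 :=
  FreeAlgebra.lift_ι_apply _ _

lemma permWord_apply_of_lt {n : ℕ} {w : List (ℕ × Bool)} (hw : WordIn n w) {x : ℕ}
    (hx : n < x) : permWord w x = x := by
  induction w with
  | nil => rfl
  | cons l t ih =>
    have hl := hw l List.mem_cons_self
    rw [permWord, List.foldr_cons, Equiv.Perm.mul_apply, ← permWord,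
      ih fun l' hl' => hw l' (List.mem_cons_of_mem l hl'),
      Equiv.swap_apply_of_ne_of_ne (by omega) (by omega)]

lemma zsmul_eq_of_mul_self_eq_one {G : Type*} [AddCommGroup G] {a b : ℤ} {x y : G}
    (hb : b * b = 1) (h : a • x = b • y) : y = (b * a) • x := by
  rw [mul_zsmul, h, smul_smul, hb, one_zsmul]

section Twist

variable {m : ℕ}

noncomputable def twist (m : ℕ) (h : ℕ → ℤ) : FA m →ₐ[ℤ] FA m :=
  FreeAlgebra.lift ℤ fun q : Idx m => (h q.val.1 * h q.val.2) • FreeAlgebra.ι ℤ q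

lemma twist_ι (h : ℕ → ℤ) (q : Idx m) :
    twist m h (FreeAlgebra.ι ℤ q) = (h q.val.1 * h q.val.2) • FreeAlgebra.ι ℤ q :=
  FreeAlgebra.lift_ι_apply _ _

lemma twist_gen (h : ℕ → ℤ) (i j : ℕ) : twist m h (gen m i j) = (h i * h j) • gen m i j := by
  by_cases hij : i ≠ j ∧ 1 ≤ i ∧ i ≤ m ∧ 1 ≤ j ∧ j ≤ m
  · rw [gen_eq_ι hij, twist_ι]
  · simp [gen, dif_neg hij]

lemma twist_incl (h : ℕ → ℤ) (x : FA m) : twist (m+1) h (incl m x) = incl m (twist m h x) := by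
  have : (twist (m+1) h).comp (incl m) = (incl m).comp (twist m h) := by
    refine FreeAlgebra.hom_ext (funext fun q => ?_)
    simp only [Function.comp_apply, AlgHom.coe_comp, incl_ι, twist_ι, twist_gen, map_zsmul]
  exact DFunLike.congr_fun this x

lemma map_twist {A : Type*} [Ring A] {ε δ : FA m →+* A} {h : ℕ → ℤ}
    (hδ : ∀ i j, δ (gen m i j) = (h i : A) * (h j : A) * ε (gen m i j)) (x : FA m) :
    ε (twist m h x) = δ x := by
  have : ε.toIntAlgHom.comp (twist m h) = δ.toIntAlgHom := by
    refine FreeAlgebra.hom_ext (funext fun q => ?_)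
    change ε (twist m h (FreeAlgebra.ι ℤ q)) = δ (FreeAlgebra.ι ℤ q)
    rw [twist_ι, map_zsmul, ← gen_eq_ι q.prop, hδ, zsmul_eq_mul, Int.cast_mul]
  exact DFunLike.congr_fun this x

variable {h : ℕ → ℤ}

lemma twist_gen_mul_gen (hsq : ∀ i, h i * h i = 1) (a c b : ℕ) :
    twist m h (gen m a c * gen m c b) = (h a * h b) • (gen m a c * gen m c b) := by
  rw [map_mul, twist_gen, twist_gen, smul_mul_smul_comm]
  congr 1
  linear_combination h a * h b * hsq c

lemma twist_phiLetter_ι (hsq : ∀ i, h i * h i = 1) (l : ℕ × Bool) (q : Idx m) :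
    twist m h (phiLetter m l (FreeAlgebra.ι ℤ q)) =
      (h (Equiv.swap l.1 (l.1+1) q.val.1) * h (Equiv.swap l.1 (l.1+1) q.val.2)) •
        phiLetter m l (FreeAlgebra.ι ℤ q) := by
  obtain ⟨k, b⟩ := l
  obtain ⟨⟨i, j⟩, hij : i ≠ j, -⟩ := q
  have hji := Ne.symm hij
  rw [phiLetter, FreeAlgebra.lift_ι_apply]
  dsimp only
  unfold phiGenImg phiInvGenImg
  split_ifs <;> subst_vars <;>
    simp only [map_neg, map_sub, twist_gen, twist_gen_mul_gen hsq, smul_neg, smul_sub,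
      Equiv.swap_apply_left, Equiv.swap_apply_right, Equiv.swap_apply_of_ne_of_ne, Ne, *,
      not_false_eq_true]

lemma twist_comp_phiLetter (hsq : ∀ i, h i * h i = 1) (l : ℕ × Bool) :
    (twist m h).comp (phiLetter m l) =
      (phiLetter m l).comp (twist m (h ∘ Equiv.swap l.1 (l.1+1))) := by
  refine FreeAlgebra.hom_ext (funext fun q => ?_)
  simp only [Function.comp_apply, AlgHom.coe_comp, twist_phiLetter_ι hsq, twist_ι, map_zsmul]

lemma twist_comp_phiWord (w : List (ℕ × Bool)) (hsq : ∀ i, h i * h i = 1) :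
    (twist m h).comp (phiWord m w) = (phiWord m w).comp (twist m (h ∘ permWord w)) := by
  induction w generalizing h with
  | nil => rfl
  | cons l t ih =>
    change (twist m h).comp ((phiLetter m l).comp (phiWord m t)) =
      ((phiLetter m l).comp (phiWord m t)).comp
        (twist m (h ∘ ⇑(Equiv.swap l.1 (l.1+1) * permWord t)))
    rw [← AlgHom.comp_assoc, twist_comp_phiLetter hsq, AlgHom.comp_assoc,
      ih (h := h ∘ _) fun i => hsq _, AlgHom.comp_assoc, Equiv.Perm.coe_mul, Function.comp_assoc]

lemma twist_phiWord_gen (w : List (ℕ × Bool)) (hsq : ∀ i, h i * h i = 1) (a b : ℕ) :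
    twist m h (phiWord m w (gen m a b)) =
      (h (permWord w a) * h (permWord w b)) • phiWord m w (gen m a b) := by
  rw [← AlgHom.comp_apply, twist_comp_phiWord w hsq, AlgHom.comp_apply, twist_gen, map_zsmul,
    Function.comp_apply, Function.comp_apply]

end Twist

section Extend

variable {A : Type*} [Ring A] {n : ℕ}

noncomputable def extendHom (n : ℕ) (η : FA n →+* A) (c : ℕ → ℕ → A) : FA (n+1) →ₐ[ℤ] A :=
  FreeAlgebra.lift ℤ fun q : Idx (n+1) =>
    if q.val.1 = n+1 ∨ q.val.2 = n+1 then c q.val.1 q.val.2 else η (gen n q.val.1 q.val.2)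

variable {η : FA n →+* A} {c : ℕ → ℕ → A}

lemma extendHom_incl (x : FA n) : extendHom n η c (incl n x) = η x := by
  have : (extendHom n η c).comp (incl n) = η.toIntAlgHom := by
    refine FreeAlgebra.hom_ext (funext fun q => ?_)
    obtain ⟨⟨a, b⟩, hab, ha, han, hb, hbn⟩ := q
    change extendHom n η c (incl n (FreeAlgebra.ι ℤ _)) = η (FreeAlgebra.ι ℤ _)
    rw [incl_ι, extendHom, lift_gen _ ⟨hab, ha, by omega, hb, by omega⟩]
    dsimp only
    rw [if_neg (by omega), gen_eq_ι]
  exact DFunLike.congr_fun this x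

lemma extendHom_gen {a b : ℕ} (hab : a ≠ b) (ha : 1 ≤ a) (hb : 1 ≤ b)
    (hlast : a = n+1 ∧ b ≤ n ∨ a ≤ n ∧ b = n+1) :
    extendHom n η c (gen (n+1) a b) = c a b := by
  rw [extendHom, lift_gen _ ⟨hab, ha, by omega, hb, by omega⟩]
  exact if_pos (show a = n+1 ∨ b = n+1 by omega)

lemma extendHom_sum_mul_gen (m : ℕ → FA n) {t : ℕ} (ht : t ∈ Finset.Icc 1 n) :
    extendHom n η (fun a _ => if a = t then 1 else 0)
      (∑ j ∈ Finset.Icc 1 n, incl n (m j) * gen (n+1) j (n+1)) = η (m t) := by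
  rw [map_sum, Finset.sum_eq_single_of_mem t ht fun j hj hjt => ?_]
  · rw [Finset.mem_Icc] at ht
    rw [map_mul, extendHom_incl, extendHom_gen (by omega) ht.1 (by omega) (by omega), if_pos rfl,
      mul_one]
  · rw [Finset.mem_Icc] at hj
    rw [map_mul, extendHom_gen (by omega) hj.1 (by omega) (by omega), if_neg hjt, mul_zero]

lemma extendHom_sum_gen_mul (m : ℕ → FA n) {t : ℕ} (ht : t ∈ Finset.Icc 1 n) :
    extendHom n η (fun _ b => if b = t then 1 else 0)
      (∑ j ∈ Finset.Icc 1 n, gen (n+1) (n+1) j * incl n (m j)) = η (m t) := by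
  rw [map_sum, Finset.sum_eq_single_of_mem t ht fun j hj hjt => ?_]
  · rw [Finset.mem_Icc] at ht
    rw [map_mul, extendHom_incl, extendHom_gen (by omega) (by omega) ht.1 (by omega), if_pos rfl,
      one_mul]
  · rw [Finset.mem_Icc] at hj
    rw [map_mul, extendHom_gen (by omega) (by omega) hj.1 (by omega), if_neg hjt, zero_mul]

end Extend

section Entries

variable {A : Type*} [Ring A] {n : ℕ} {ε δ : FA n →+* A} {g : ℕ → ℤ} {w : List (ℕ × Bool)}
  {i j : ℕ}

lemma delta_PhiL_entry (hsq : ∀ i, g i * g i = 1)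
    (hδ : ∀ i j, δ (gen n i j) = (g i : A) * (g j : A) * ε (gen n i j)) (hw : WordIn n w)
    {M : ℕ → ℕ → FA n} (hL : IsPhiL n w M) (hi : i ∈ Finset.Icc 1 n)
    (hj : j ∈ Finset.Icc 1 n) :
    δ (M i j) = (g (permWord w i) : A) * (g j : A) * ε (M i j) := by
  set x := phiWord (n+1) w (gen (n+1) i (n+1))
  have hx : x = ∑ j ∈ Finset.Icc 1 n, incl n (M i j) * gen (n+1) j (n+1) := hL.2 i hi
  have hscale : twist (n+1) g x = (g (permWord w i) * g (n+1)) • x := by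
    rw [twist_phiWord_gen w hsq, permWord_apply_of_lt hw n.lt_succ_self]
  have htwist : twist (n+1) g x = ∑ j ∈ Finset.Icc 1 n,
      incl n ((g j * g (n+1)) • twist n g (M i j)) * gen (n+1) j (n+1) := by
    rw [hx, map_sum]
    refine Finset.sum_congr rfl fun j _ => ?_
    rw [map_mul, twist_incl, twist_gen, map_zsmul, mul_smul_comm, smul_mul_assoc]
  have hcoeff := congrArg (extendHom n ε fun a _ => if a = j then 1 else 0)
    (hscale.symm.trans htwist)
  rw [map_zsmul, hx, extendHom_sum_mul_gen _ hj, extendHom_sum_mul_gen _ hj, map_zsmul,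
    map_twist hδ] at hcoeff
  rw [zsmul_eq_of_mul_self_eq_one (by linear_combination (g (n+1) * g (n+1)) * hsq j + hsq (n+1))
    hcoeff, ← Int.cast_mul, ← zsmul_eq_mul]
  congr 1
  linear_combination (g (permWord w i) * g j) * hsq (n+1)

lemma delta_PhiR_entry (hsq : ∀ i, g i * g i = 1)
    (hδ : ∀ i j, δ (gen n i j) = (g i : A) * (g j : A) * ε (gen n i j)) (hw : WordIn n w)
    {M : ℕ → ℕ → FA n} (hR : IsPhiR n w M) (hi : i ∈ Finset.Icc 1 n)
    (hj : j ∈ Finset.Icc 1 n) :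
    δ (M i j) = (g i : A) * (g (permWord w j) : A) * ε (M i j) := by
  set x := phiWord (n+1) w (gen (n+1) (n+1) j)
  have hx : x = ∑ i ∈ Finset.Icc 1 n, gen (n+1) (n+1) i * incl n (M i j) := hR.2 j hj
  have hscale : twist (n+1) g x = (g (n+1) * g (permWord w j)) • x := by
    rw [twist_phiWord_gen w hsq, permWord_apply_of_lt hw n.lt_succ_self]
  have htwist : twist (n+1) g x = ∑ i ∈ Finset.Icc 1 n,
      gen (n+1) (n+1) i * incl n ((g (n+1) * g i) • twist n g (M i j)) := by
    rw [hx, map_sum]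
    refine Finset.sum_congr rfl fun i _ => ?_
    rw [map_mul, twist_incl, twist_gen, map_zsmul, mul_smul_comm, smul_mul_assoc]
  have hcoeff := congrArg (extendHom n ε fun _ b => if b = i then 1 else 0)
    (hscale.symm.trans htwist)
  rw [map_zsmul, hx, extendHom_sum_gen_mul _ hi, extendHom_sum_gen_mul _ hi, map_zsmul,
    map_twist hδ] at hcoeff
  rw [zsmul_eq_of_mul_self_eq_one (by linear_combination (g (n+1) * g (n+1)) * hsq i + hsq (n+1))
    hcoeff, ← Int.cast_mul, ← zsmul_eq_mul]
  congr 1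
  linear_combination (g i * g (permWord w j)) * hsq (n+1)

end Entries

/-- If `δ(a_{ij}) = g(i)g(j)ε(a_{ij})` for a sign function `g`, then
`δ((Φ^L_β)_{ij}) = g(perm(β)(i)) g(j) ε((Φ^L_β)_{ij})` and
`δ((Φ^R_β)_{ij}) = g(i) g(perm(β)(j)) ε((Φ^R_β)_{ij})`. -/
theorem delta_of_Phi_entries (n : ℕ) (ε δ : FA n →+* ℂ) (g : ℕ → ℤ)
    (hg : ∀ i, g i = 1 ∨ g i = -1)
    (hδ : ∀ i j, δ (gen n i j) = (g i : ℂ) * (g j : ℂ) * ε (gen n i j))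
    (w : List (ℕ × Bool)) (hw : WordIn n w)
    (M M' : ℕ → ℕ → FA n) (hL : IsPhiL n w M) (hR : IsPhiR n w M') :
    ∀ i ∈ Finset.Icc 1 n, ∀ j ∈ Finset.Icc 1 n,
      δ (M i j) = (g (permWord w i) : ℂ) * (g j : ℂ) * ε (M i j) ∧
      δ (M' i j) = (g i : ℂ) * (g (permWord w j) : ℂ) * ε (M' i j) := by
  have hsq : ∀ i, g i * g i = 1 := fun i => by rcases hg i with h | h <;> simp [h]
  exact fun i hi j hj =>
    ⟨delta_PhiL_entry hsq hδ hw hL hi hj, delta_PhiR_entry hsq hδ hw hR hi hj⟩
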